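/- For all β ∈ [2, 2√2], the von Neumann entropy bound exceeds the min-entropy bound: 1 − h(1/2 + (1/2)√((β/2)² − 1)) ≥ −log₂(1/2 + (1/2)√(2 − β²/4)), with equality exactly at β = 2 and β = 2√2. -/
import Mathlib


open Real

/-- Binary entropy h(p) = −p log₂ p − (1−p) log₂(1−p). -/
noncomputable def binEnt2 (p : ℝ) : ℝ :=
  -(p * Real.logb 2 p) - (1 - p) * Real.logb 2 (1 - p)

lemma key_log {p : ℝ} (hp : 1/2 < p) (hp1 : p < 1) :
    -(p * Real.log p) - (1 - p) * Real.log (1 - p)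
      < 2 * Real.log (sqrt p + sqrt (1 - p)) := by
  set q := 1 - p with hq
  have hp0 : 0 < p := by linarith
  have hq0 : 0 < q := by simp [hq]; linarith
  have ha : (0:ℝ) < sqrt p := Real.sqrt_pos.2 hp0
  have hb : (0:ℝ) < sqrt q := Real.sqrt_pos.2 hq0
  have hne : (sqrt p)⁻¹ ≠ (sqrt q)⁻¹ := by
    have : sqrt q < sqrt p := Real.sqrt_lt_sqrt hq0.le (by linarith)
    exact fun h => absurd (inv_injective h) (by linarith)
  have h := strictConcaveOn_log_Ioi.2 (Set.mem_Ioi.2 (inv_pos.2 ha))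
    (Set.mem_Ioi.2 (inv_pos.2 hb)) hne hp0 hq0 (by ring)
  have e1 : p • (sqrt p)⁻¹ = sqrt p := by
    rw [smul_eq_mul, ← div_eq_mul_inv, Real.div_sqrt]
  have e2 : q • (sqrt q)⁻¹ = sqrt q := by
    rw [smul_eq_mul, ← div_eq_mul_inv, Real.div_sqrt]
  rw [e1, e2, smul_eq_mul, smul_eq_mul, Real.log_inv, Real.log_inv,
    Real.log_sqrt hp0.le, Real.log_sqrt hq0.le] at h
  ring_nf at h ⊢
  linarith [h]

lemma key {p : ℝ} (hp : 1/2 < p) (hp1 : p < 1) :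
    binEnt2 p < Real.logb 2 (1 + 2 * sqrt (p * (1 - p))) := by
  have hp0 : 0 < p := by linarith
  have hq0 : 0 < 1 - p := by linarith
  have hx : 1 + 2 * sqrt (p * (1 - p)) = (sqrt p + sqrt (1 - p))^2 := by
    have := Real.sq_sqrt hp0.le
    have := Real.sq_sqrt hq0.le
    have := Real.sqrt_mul hp0.le (1 - p)
    nlinarith
  rw [hx]
  unfold binEnt2
  rw [Real.logb, Real.logb, Real.logb, Real.log_pow]
  have h2 : (0:ℝ) < Real.log 2 := Real.log_pos (by norm_num)
  rw [div_eq_mul_inv, div_eq_mul_inv, div_eq_mul_inv]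
  have := key_log hp hp1
  have h2' : (0:ℝ) < (Real.log 2)⁻¹ := inv_pos.2 h2
  push_cast
  nlinarith [key_log hp hp1]

lemma be_half : binEnt2 (1/2 : ℝ) = 1 := by
  have h : Real.logb 2 (1/2 : ℝ) = -1 := by
    rw [one_div, Real.logb_inv, Real.logb_self_eq_one] <;> norm_num
  norm_num [binEnt2, h]

lemma be_one : binEnt2 (1 : ℝ) = 0 := by
  norm_num [binEnt2]

/-- For all β ∈ [2, 2√2], the von Neumann entropy bound exceeds the
min-entropy bound: 1 − h(1/2 + (1/2)√((β/2)² − 1)) ≥ −log₂(1/2 + (1/2)√(2 − β²/4)),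
with equality exactly at β = 2 and β = 2√2. -/
theorem vonNeumann_bound_ge_minEntropy_bound :
    ∀ β ∈ Set.Icc (2 : ℝ) (2 * sqrt 2),
      (1 - binEnt2 (1 / 2 + (1 / 2) * sqrt ((β / 2) ^ 2 - 1))
          ≥ - Real.logb 2 (1 / 2 + (1 / 2) * sqrt (2 - β ^ 2 / 4))) ∧
      ((1 - binEnt2 (1 / 2 + (1 / 2) * sqrt ((β / 2) ^ 2 - 1))
          = - Real.logb 2 (1 / 2 + (1 / 2) * sqrt (2 - β ^ 2 / 4)))
        ↔ (β = 2 ∨ β = 2 * sqrt 2)) := by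
  intro β hβ
  obtain ⟨hβ2, hβs⟩ := hβ
  have hsq2 : (sqrt 2) ^ 2 = 2 := Real.sq_sqrt (by norm_num)
  rcases eq_or_lt_of_le hβ2 with h2 | h2
  · -- β = 2
    have hβ : β = 2 := h2.symm
    subst hβ
    have e1 : ((2:ℝ) / 2) ^ 2 - 1 = 0 := by norm_num
    have e2 : (2:ℝ) - 2 ^ 2 / 4 = 1 := by norm_num
    rw [e1, e2, Real.sqrt_zero, Real.sqrt_one]
    norm_num [be_half]
  rcases eq_or_lt_of_le hβs with h8 | h8
  · -- β = 2√2
    subst h8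
    have e1 : ((2 * sqrt 2) / 2) ^ 2 - 1 = 1 := by
      rw [mul_div_cancel_left₀ _ (by norm_num : (2:ℝ) ≠ 0)]; rw [hsq2]; norm_num
    have e2 : (2:ℝ) - (2 * sqrt 2) ^ 2 / 4 = 0 := by
      rw [mul_pow, hsq2]; norm_num
    rw [e1, e2, Real.sqrt_one, Real.sqrt_zero]
    have h : Real.logb 2 ((1:ℝ)/2 + 1/2 * 0) = -1 := by
      norm_num
      rw [one_div, Real.logb_inv, Real.logb_self_eq_one] <;> norm_num
    norm_num at h ⊢
    rw [h]
    norm_num [be_one]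
  · -- interior
    have hβ4 : 4 < β ^ 2 := by nlinarith
    have hβ8 : β ^ 2 < 8 := by nlinarith
    set s := sqrt ((β / 2) ^ 2 - 1) with hs
    have hs_sq : s ^ 2 = (β / 2) ^ 2 - 1 := Real.sq_sqrt (by nlinarith)
    have hs0 : 0 < s := Real.sqrt_pos.2 (by nlinarith)
    have hs1 : s < 1 := by nlinarith
    set p : ℝ := 1 / 2 + (1 / 2) * s with hpdef
    have hp : 1/2 < p := by simp [hpdef]; linarith
    have hp1 : p < 1 := by simp [hpdef]; linarith
    set t := sqrt (2 - β ^ 2 / 4) with ht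
    have ht_sq : t ^ 2 = 2 - β ^ 2 / 4 := Real.sq_sqrt (by nlinarith)
    have ht0 : 0 ≤ t := Real.sqrt_nonneg _
    have hpq : p * (1 - p) = (t / 2) ^ 2 := by
      rw [hpdef]; nlinarith
    have hroot : sqrt (p * (1 - p)) = t / 2 := by
      rw [hpq, Real.sqrt_sq (by linarith)]
    have hkey := key hp hp1
    rw [hroot] at hkey
    have harg : 1 + 2 * (t / 2) = 1 + t := by ring
    rw [harg] at hkey
    have hlogb : Real.logb 2 (1 / 2 + 1 / 2 * t) = Real.logb 2 (1 + t) - 1 := by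
      have : (1:ℝ) / 2 + 1 / 2 * t = (1 + t) / 2 := by ring
      rw [this, Real.logb_div (by linarith) (by norm_num), Real.logb_self_eq_one] <;> norm_num
    constructor
    · rw [hlogb]; linarith
    · constructor
      · intro heq
        rw [hlogb] at heq
        exfalso; linarith
      · rintro (rfl | rfl)
        · exact absurd h2 (lt_irrefl _)
        · exact absurd h8 (lt_irrefl _)
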